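/- arXiv:2106.04634 — 2 statements merged into one kernel-verified Lean document; each statement's English description precedes it below -/
import Mathlib

section
/- Let d ≥ 2 and let σ_star(p) = ρ_{A₁B}(p) ⊗ ρ_{A₂C}(p) be the 3-partite pair-entangled-network state on the star graph in which party A holds two qudits A₁ and A₂ and shares a d-dimensional isotropic state of visibility p with party B (via A₁) and with party C (via A₂). If p ≤ ((1+√2)d − 1)/(d² + 2d − 1), then σ_star(p) is biseparable with respect to the tripartition A|B|C. -/
open scoped BigOperators

noncomputable section

/-- Projector onto the `d`-dimensional maximally entangled state
`|φ⁺_d⟩ = (1/√d) ∑ᵢ |ii⟩`, as a matrix on `ℂ^d ⊗ ℂ^d`. -/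
def phiPlus (d : ℕ) : Matrix (Fin d × Fin d) (Fin d × Fin d) ℂ :=
  fun x y => if x.1 = x.2 ∧ y.1 = y.2 then (1 / (d : ℂ)) else 0

/-- The `d`-dimensional isotropic state with visibility `p`:
`ρ(p) = p φ⁺_d + (1-p) 𝟙/d²`. -/
def iso (d : ℕ) (p : ℝ) : Matrix (Fin d × Fin d) (Fin d × Fin d) ℂ :=
  (p : ℂ) • phiPlus d +
    (((1 - p) / (d : ℝ) ^ 2 : ℝ) : ℂ) • (1 : Matrix (Fin d × Fin d) (Fin d × Fin d) ℂ)

/-- The (possibly unnormalized) projector `|ψ⟩⟨ψ|` onto a vector `ψ`. -/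
def vecProj {ι : Type} (ψ : ι → ℂ) : Matrix ι ι ℂ :=
  fun i j => ψ i * (starRingEnd ℂ) (ψ j)

/-- A pure tripartite vector factors across the bipartition `A|BC`. -/
def factorsA {α β γ : Type} (ψ : α × β × γ → ℂ) : Prop :=
  ∃ (f : α → ℂ) (g : β × γ → ℂ), ∀ a b c, ψ (a, b, c) = f a * g (b, c)

/-- A pure tripartite vector factors across the bipartition `B|AC`. -/
def factorsB {α β γ : Type} (ψ : α × β × γ → ℂ) : Prop :=
  ∃ (f : β → ℂ) (g : α × γ → ℂ), ∀ a b c, ψ (a, b, c) = f b * g (a, c)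

/-- A pure tripartite vector factors across the bipartition `C|AB`. -/
def factorsC {α β γ : Type} (ψ : α × β × γ → ℂ) : Prop :=
  ∃ (f : γ → ℂ) (g : α × β → ℂ), ∀ a b c, ψ (a, b, c) = f c * g (a, b)

/-- A tripartite density matrix (parties `A`, `B`, `C`) is biseparable if it is a finite
convex combination of projectors onto normalized pure states, each of which factors
across one of the three bipartitions `A|BC`, `B|AC`, `C|AB`. -/
def Bisep3 {α β γ : Type} [Fintype α] [Fintype β] [Fintype γ]
    (ρ : Matrix (α × β × γ) (α × β × γ) ℂ) : Prop :=
  ∃ (k : ℕ) (w : Fin k → ℝ) (ψ : Fin k → α × β × γ → ℂ),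
    (∀ t, 0 ≤ w t) ∧ (∑ t, w t = 1) ∧
    (∀ t, factorsA (ψ t) ∨ factorsB (ψ t) ∨ factorsC (ψ t)) ∧
    (∀ t, ∑ x, Complex.normSq (ψ t x) = 1) ∧
    ρ = ∑ t, (w t : ℂ) • vecProj (ψ t)

/-- The 3-partite star PEN state `σ_star(p) = ρ_{A₁B}(p) ⊗ ρ_{A₂C}(p)`.
Party `A` holds the pair `(a₁, a₂)`, party `B` holds `b`, party `C` holds `c`;
the global index is `((a₁, a₂), b, c)`. -/
def sigmaStar (d : ℕ) (p : ℝ) :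
    Matrix ((Fin d × Fin d) × Fin d × Fin d) ((Fin d × Fin d) × Fin d × Fin d) ℂ :=
  fun x y =>
    iso d p (x.1.1, x.2.1) (y.1.1, y.2.1) * iso d p (x.1.2, x.2.2) (y.1.2, y.2.2)

/-!
Write `ρ(p) = a • P + b • 𝟙` with `P = |Φ⟩⟨Φ|`, `Φ = ∑ᵢ |ii⟩`, `a = p/d`, `b = (1-p)/d²`, so
`σ_star = a² P⋆P + ab (P⋆𝟙 + 𝟙⋆P) + b² 𝟙`, where `M⋆N` places `M` on `A₁B` and `N` on `A₂C`.
The operator `P + 𝟙` is separable: averaging `|f⟩|f̄⟩` over all phase vectors `f` with entries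
cube roots of unity gives `P + 𝟙 - diag P`, and the diagonal is a sum of product projectors.
Hence `P⋆(P + 𝟙)` and `P⋆𝟙` are separable across `C|AB` and their mirror images across `B|AC`,
while `P⋆P + 𝟙` is the operator `P + 𝟙` of the bipartition `A|BC` itself. Moving the weight
`min (a²/2) (ab)` of `P⋆P` into each of `P⋆(P + 𝟙)` and `(P + 𝟙)⋆P` and the rest into
`P⋆P + 𝟙` leaves all weights nonnegative as soon as `a² ≤ 2ab + b²`, i.e.
`d p ≤ (1 + √2)(1 - p)`, which is the hypothesis on `p`.
-/

open Finset

section Phases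

variable {T : Type}

lemma vecProj_stdAddChar_apply (κ : T → ZMod 3) (x y : T × T) :
    vecProj (fun x => ZMod.stdAddChar (κ x.1) * ZMod.stdAddChar (-κ x.2)) x y =
      ZMod.stdAddChar (κ x.1 - κ x.2 - κ y.1 + κ y.2) := by
  simp only [vecProj, ← AddChar.map_neg_eq_conj, ← AddChar.map_add_eq_mul]
  ring_nf

variable [DecidableEq T]

-- With phases `±1` the pairing `a = e ∧ b = c` would survive as well; in `ZMod 3` it leaves `2`.
lemma exists_sub_sub_add_ne_zero {a b c e : T} (h : ¬((a = b ∧ c = e) ∨ (a = c ∧ b = e))) :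
    ∃ κ : T → ZMod 3, κ a - κ b - κ c + κ e ≠ 0 := by
  by_cases hab : a = b
  · subst hab
    have hce : e ≠ c := fun h' => h (Or.inl ⟨rfl, h'.symm⟩)
    exact ⟨fun t => if t = c then 1 else 0, by simp [hce]⟩
  by_cases hac : a = c
  · subst hac
    have hbe : e ≠ b := fun h' => h (Or.inr ⟨rfl, h'.symm⟩)
    exact ⟨fun t => if t = b then 1 else 0, by simp [hbe]⟩
  refine ⟨fun t => if t = a then 1 else 0, ?_⟩
  simp only [if_neg (Ne.symm hab), if_neg (Ne.symm hac)]
  split_ifs <;> decide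

variable [Fintype T]

lemma sum_stdAddChar_sub_sub_add (a b c e : T) :
    ∑ κ : T → ZMod 3, ZMod.stdAddChar (κ a - κ b - κ c + κ e) =
      if (a = b ∧ c = e) ∨ (a = c ∧ b = e) then (3 : ℂ) ^ Fintype.card T else 0 := by
  split_ifs with h
  · have hzero : ∀ κ : T → ZMod 3, κ a - κ b - κ c + κ e = 0 := by
      rcases h with ⟨rfl, rfl⟩ | ⟨rfl, rfl⟩ <;> intro κ <;> ring
    simp [hzero]
  · obtain ⟨κ₀, hκ₀⟩ := exists_sub_sub_add_ne_zero h
    let L : (T → ZMod 3) →+ ZMod 3 := Pi.evalAddMonoidHom (fun _ => ZMod 3) a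
      - Pi.evalAddMonoidHom (fun _ => ZMod 3) b - Pi.evalAddMonoidHom (fun _ => ZMod 3) c
      + Pi.evalAddMonoidHom (fun _ => ZMod 3) e
    refine AddChar.sum_eq_zero_of_ne_one (ψ := ZMod.stdAddChar.compAddMonoidHom L) fun h1 => hκ₀ ?_
    exact ZMod.injective_stdAddChar (by simpa [L] using DFunLike.congr_fun h1 κ₀)

end Phases

section Cones

variable {α β γ : Type}

def IsBisepVec (ψ : α × β × γ → ℂ) : Prop :=
  factorsA ψ ∨ factorsB ψ ∨ factorsC ψ

lemma IsBisepVec.smul {ψ : α × β × γ → ℂ} (hψ : IsBisepVec ψ) (c : ℂ) : IsBisepVec (c • ψ) := by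
  rcases hψ with ⟨f, g, h⟩ | ⟨f, g, h⟩ | ⟨f, g, h⟩
  · exact Or.inl ⟨c • f, g, fun a b c => by simp [h, mul_assoc]⟩
  · exact Or.inr (Or.inl ⟨c • f, g, fun a b c => by simp [h, mul_assoc]⟩)
  · exact Or.inr (Or.inr ⟨c • f, g, fun a b c => by simp [h, mul_assoc]⟩)

lemma vecProj_smul {ι : Type} (c : ℂ) (ψ : ι → ℂ) :
    vecProj (c • ψ) = Complex.normSq c • vecProj ψ := by
  ext i j
  simp only [vecProj, Pi.smul_apply, smul_eq_mul, map_mul, Matrix.smul_apply, Complex.real_smul,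
    ← Complex.mul_conj]
  ring

lemma trace_vecProj {ι : Type} [Fintype ι] (ψ : ι → ℂ) :
    (vecProj ψ).trace = ((∑ i, Complex.normSq (ψ i) : ℝ) : ℂ) := by
  simp [Matrix.trace, vecProj, Complex.mul_conj]

variable [Fintype α] [Fintype β] [Fintype γ]

variable (α β γ) in
def bisepCone : PointedCone ℝ (Matrix (α × β × γ) (α × β × γ) ℂ) :=
  PointedCone.hull ℝ {ρ | ∃ ψ, IsBisepVec ψ ∧ ∑ x, Complex.normSq (ψ x) = 1 ∧ vecProj ψ = ρ}

lemma vecProj_mem_bisepCone {ψ : α × β × γ → ℂ} (hψ : IsBisepVec ψ) :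
    vecProj ψ ∈ bisepCone α β γ := by
  set s := ∑ x, Complex.normSq (ψ x)
  rcases (sum_nonneg fun x _ => Complex.normSq_nonneg (ψ x) : 0 ≤ s).eq_or_lt with hs | hs
  · have hψ0 : ψ = 0 := funext fun x => Complex.normSq_eq_zero.mp
      ((sum_eq_zero_iff_of_nonneg fun x _ => Complex.normSq_nonneg _).mp hs.symm x (mem_univ x))
    rw [hψ0, show vecProj (0 : α × β × γ → ℂ) = 0 by ext; simp [vecProj]]
    exact zero_mem _
  set c : ℂ := (((Real.sqrt s)⁻¹ : ℝ) : ℂ)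
  have hc : Complex.normSq c = s⁻¹ := by
    rw [Complex.normSq_ofReal, ← mul_inv, Real.mul_self_sqrt hs.le]
  have hnorm : ∑ x, Complex.normSq ((c • ψ) x) = 1 := by
    simp only [Pi.smul_apply, smul_eq_mul, Complex.normSq_mul, hc, ← mul_sum]
    exact inv_mul_cancel₀ hs.ne'
  have hproj : vecProj ψ = s • vecProj (c • ψ) := by
    rw [vecProj_smul, hc, smul_smul, mul_inv_cancel₀ hs.ne', one_smul]
  rw [hproj]
  exact (bisepCone α β γ).smul_mem hs.le
    (PointedCone.subset_hull ⟨c • ψ, hψ.smul c, hnorm, rfl⟩)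

lemma bisep3_of_mem_bisepCone {ρ : Matrix (α × β × γ) (α × β × γ) ℂ}
    (hρ : ρ ∈ bisepCone α β γ) (htr : ρ.trace = 1) : Bisep3 ρ := by
  obtain ⟨n, w, g, hsum⟩ := Submodule.mem_span_set'.mp hρ
  choose ψ hψ hnorm hproj using fun t => (g t).2
  have hρ_eq : ρ = ∑ t, ((w t : ℝ) : ℂ) • vecProj (ψ t) := by
    rw [← hsum]
    refine sum_congr rfl fun t _ => ?_
    rw [hproj, Complex.coe_smul]
    rfl
  refine ⟨n, fun t => w t, ψ, fun t => (w t).2, ?_, hψ, hnorm, hρ_eq⟩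
  have htr' := congrArg Matrix.trace hρ_eq
  simp only [htr, Matrix.trace_sum, Matrix.trace_smul, trace_vecProj, hnorm, Complex.ofReal_one,
    smul_eq_mul, mul_one] at htr'
  exact_mod_cast htr'.symm

variable (α β) in
def sepCone : PointedCone ℝ (Matrix (α × β) (α × β) ℂ) :=
  PointedCone.hull ℝ {ρ | ∃ (f : α → ℂ) (g : β → ℂ), vecProj (fun x => f x.1 * g x.2) = ρ}

lemma sepCone_le_bisepCone : sepCone α (β × γ) ≤ bisepCone α β γ :=
  Submodule.span_le.mpr fun _ ⟨f, g, hρ⟩ =>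
    hρ ▸ vecProj_mem_bisepCone (Or.inl ⟨f, g, fun _ _ _ => rfl⟩)

lemma sum_vecProj_single {ι : Type} [Fintype ι] [DecidableEq ι] :
    ∑ x : ι, vecProj (Pi.single x 1) = (1 : Matrix ι ι ℂ) := by
  ext y z
  simp [Matrix.sum_apply, vecProj, Pi.single_apply, Matrix.one_apply]

lemma one_mem_sepCone [DecidableEq α] [DecidableEq β] :
    (1 : Matrix (α × β) (α × β) ℂ) ∈ sepCone α β := by
  rw [← sum_vecProj_single]
  refine sum_mem fun x _ => PointedCone.subset_hull ⟨Pi.single x.1 1, Pi.single x.2 1, ?_⟩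
  congr 1
  ext y
  simp only [Pi.single_apply, Prod.ext_iff, ite_zero_mul_ite_zero, one_mul]

end Cones

section StarTensor

variable {α α' β γ : Type}

def starTensor (M : Matrix (α × β) (α × β) ℂ) (N : Matrix (α' × γ) (α' × γ) ℂ) :
    Matrix ((α × α') × β × γ) ((α × α') × β × γ) ℂ :=
  fun X Y => M (X.1.1, X.2.1) (Y.1.1, Y.2.1) * N (X.1.2, X.2.2) (Y.1.2, Y.2.2)

def starTensorVec (u : α × β → ℂ) (v : α' × γ → ℂ) : (α × α') × β × γ → ℂ :=
  fun X => u (X.1.1, X.2.1) * v (X.1.2, X.2.2)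

lemma starTensor_vecProj (u : α × β → ℂ) (v : α' × γ → ℂ) :
    starTensor (vecProj u) (vecProj v) = vecProj (starTensorVec u v) := by
  ext X Y
  simp only [starTensor, vecProj, starTensorVec, map_mul]
  ring

variable {M M' : Matrix (α × β) (α × β) ℂ} {N N' : Matrix (α' × γ) (α' × γ) ℂ}

@[simp] lemma starTensor_zero_left : starTensor (0 : Matrix (α × β) (α × β) ℂ) N = 0 := by
  ext; simp [starTensor]

@[simp] lemma starTensor_zero_right : starTensor M (0 : Matrix (α' × γ) (α' × γ) ℂ) = 0 := by
  ext; simp [starTensor]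

lemma starTensor_add_left : starTensor (M + M') N = starTensor M N + starTensor M' N := by
  ext; simp [starTensor, add_mul]

lemma starTensor_add_right : starTensor M (N + N') = starTensor M N + starTensor M N' := by
  ext; simp [starTensor, mul_add]

lemma starTensor_smul_left (r : ℝ) : starTensor (r • M) N = r • starTensor M N := by
  ext; simp [starTensor, mul_assoc]

lemma starTensor_smul_right (r : ℝ) : starTensor M (r • N) = r • starTensor M N := by
  ext; simp [starTensor, mul_left_comm]

variable [Fintype α] [Fintype α'] [Fintype β] [Fintype γ]

lemma trace_starTensor : (starTensor M N).trace = M.trace * N.trace := by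
  simp only [Matrix.trace, Matrix.diag, starTensor, Fintype.sum_prod_type, sum_mul_sum]

lemma starTensor_vecProj_mem_bisepCone (u : α × β → ℂ) (hN : N ∈ sepCone α' γ) :
    starTensor (vecProj u) N ∈ bisepCone (α × α') β γ := by
  induction hN using Submodule.span_induction with
  | mem _ hx =>
    obtain ⟨f, g, rfl⟩ := hx
    rw [starTensor_vecProj]
    exact vecProj_mem_bisepCone <| Or.inr <| Or.inr
      ⟨g, fun ab => u (ab.1.1, ab.2) * f ab.1.2, fun _ _ _ => by simp only [starTensorVec]; ring⟩
  | zero => simp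
  | add _ _ _ _ hx hy => rw [starTensor_add_right]; exact add_mem hx hy
  | smul r _ _ hx =>
    exact (starTensor_smul_right (r : ℝ)).symm ▸ (bisepCone _ _ _).smul_mem r.2 hx

lemma starTensor_mem_bisepCone_vecProj (hM : M ∈ sepCone α β) (v : α' × γ → ℂ) :
    starTensor M (vecProj v) ∈ bisepCone (α × α') β γ := by
  induction hM using Submodule.span_induction with
  | mem _ hx =>
    obtain ⟨f, g, rfl⟩ := hx
    rw [starTensor_vecProj]
    exact vecProj_mem_bisepCone <| Or.inr <| Or.inl
      ⟨g, fun ac => f ac.1.1 * v (ac.1.2, ac.2), fun _ _ _ => by simp only [starTensorVec]; ring⟩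
  | zero => simp
  | add _ _ _ _ hx hy => rw [starTensor_add_left]; exact add_mem hx hy
  | smul r _ _ hx =>
    exact (starTensor_smul_left (r : ℝ)).symm ▸ (bisepCone _ _ _).smul_mem r.2 hx

end StarTensor

def maxEntVec (ι : Type) [DecidableEq ι] : ι × ι → ℂ := fun x => if x.1 = x.2 then 1 else 0

section MaxEnt

variable {ι : Type} [DecidableEq ι]

lemma starTensor_vecProj_maxEntVec :
    starTensor (vecProj (maxEntVec ι)) (vecProj (maxEntVec ι)) = vecProj (maxEntVec (ι × ι)) := by
  rw [starTensor_vecProj]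
  congr 1
  ext X
  simp only [starTensorVec, maxEntVec, Prod.ext_iff, ite_zero_mul_ite_zero, one_mul]

lemma starTensor_one_one :
    starTensor (1 : Matrix (ι × ι) (ι × ι) ℂ) (1 : Matrix (ι × ι) (ι × ι) ℂ) = 1 := by
  ext X Y
  simp only [starTensor, Matrix.one_apply, Prod.ext_iff, ite_zero_mul_ite_zero, one_mul]
  grind

variable [Fintype ι]

lemma sum_normSq_maxEntVec : ∑ x, Complex.normSq (maxEntVec ι x) = Fintype.card ι := by
  rw [Fintype.sum_prod_type]
  simp [maxEntVec, apply_ite Complex.normSq]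

lemma vecProj_maxEntVec_add_one_eq :
    vecProj (maxEntVec ι) + 1 = ((3 : ℝ) ^ Fintype.card ι)⁻¹ •
      ∑ κ : ι → ZMod 3, vecProj (fun x => ZMod.stdAddChar (κ x.1) * ZMod.stdAddChar (-κ x.2))
      + ∑ i : ι, vecProj (Pi.single (i, i) 1) := by
  ext x y
  simp only [Matrix.add_apply, Matrix.smul_apply, Matrix.sum_apply, vecProj_stdAddChar_apply,
    sum_stdAddChar_sub_sub_add]
  obtain ⟨a, b⟩ := x
  obtain ⟨c, e⟩ := y
  have h3 : ((3 : ℝ) ^ Fintype.card ι)⁻¹ • (3 : ℂ) ^ Fintype.card ι = 1 := by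
    rw [Complex.real_smul]; push_cast; exact inv_mul_cancel₀ (pow_ne_zero _ three_ne_zero)
  simp only [smul_ite, h3, smul_zero, vecProj, maxEntVec, Pi.single_apply, Matrix.one_apply,
    Prod.mk.injEq, ite_and, ite_mul, one_mul, zero_mul, sum_ite_eq, mem_univ,
    ↓reduceIte]
  split_ifs <;> grind

lemma vecProj_maxEntVec_add_one_mem_sepCone : vecProj (maxEntVec ι) + 1 ∈ sepCone ι ι := by
  rw [vecProj_maxEntVec_add_one_eq]
  refine add_mem ((sepCone ι ι).smul_mem (by positivity)
    (sum_mem fun κ _ => PointedCone.subset_hull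
      ⟨fun a => ZMod.stdAddChar (κ a), fun b => ZMod.stdAddChar (-κ b), rfl⟩))
    (sum_mem fun i _ => PointedCone.subset_hull ⟨Pi.single i 1, Pi.single i 1, ?_⟩)
  congr 1
  ext y
  simp only [Pi.single_apply, Prod.ext_iff, ite_zero_mul_ite_zero, one_mul]

end MaxEnt

lemma sq_le_two_mul_add_sq {a b : ℝ} (ha : 0 ≤ a) (hb : 0 ≤ b)
    (h : a ≤ (1 + Real.sqrt 2) * b) : a ^ 2 ≤ 2 * a * b + b ^ 2 := by
  have h2 : Real.sqrt 2 ^ 2 = 2 := Real.sq_sqrt (by norm_num)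
  have h1 : 1 ≤ Real.sqrt 2 := Real.one_le_sqrt.mpr (by norm_num)
  nlinarith [mul_nonpos_of_nonpos_of_nonneg (sub_nonpos.mpr h)
    (by nlinarith : 0 ≤ a + (Real.sqrt 2 - 1) * b)]

theorem starTensor_isotropic_mem_bisepCone {ι : Type} [Fintype ι] [DecidableEq ι] {a b : ℝ}
    (ha : 0 ≤ a) (hb : 0 ≤ b) (hab : a ≤ (1 + Real.sqrt 2) * b) :
    starTensor (a • vecProj (maxEntVec ι) + b • (1 : Matrix (ι × ι) (ι × ι) ℂ))
      (a • vecProj (maxEntVec ι) + b • (1 : Matrix (ι × ι) (ι × ι) ℂ)) ∈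
      bisepCone (ι × ι) ι ι := by
  set P := vecProj (maxEntVec ι)
  set μ := min (a ^ 2 / 2) (a * b)
  have hsplit : starTensor (a • P + b • (1 : Matrix (ι × ι) (ι × ι) ℂ)) (a • P + b • 1) =
      (a ^ 2 - 2 * μ) • (vecProj (maxEntVec (ι × ι)) + 1)
      + μ • (starTensor P (P + 1) + starTensor (P + 1) P)
      + (a * b - μ) • (starTensor P 1 + starTensor 1 P) + (b ^ 2 - a ^ 2 + 2 * μ) • 1 := by
    rw [← starTensor_vecProj_maxEntVec, ← starTensor_one_one]
    simp only [starTensor_add_left, starTensor_add_right, starTensor_smul_left,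
      starTensor_smul_right]
    module
  have hμ : 0 ≤ μ := le_min (by positivity) (by positivity)
  have hμa : μ ≤ a ^ 2 / 2 := min_le_left _ _
  have hμb : μ ≤ a * b := min_le_right _ _
  have hrest : 0 ≤ b ^ 2 - a ^ 2 + 2 * μ := by
    have hsq := sq_le_two_mul_add_sq ha hb hab
    rcases min_choice (a ^ 2 / 2) (a * b) with h | h <;> simp only [μ, h] <;> nlinarith
  have hPone : P + 1 ∈ sepCone ι ι := vecProj_maxEntVec_add_one_mem_sepCone
  have hone : (1 : Matrix (ι × ι) (ι × ι) ℂ) ∈ sepCone ι ι := one_mem_sepCone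
  rw [hsplit]
  refine add_mem (add_mem (add_mem ?_ ?_) ?_) ?_
  · exact (bisepCone _ _ _).smul_mem (by linarith)
      (sepCone_le_bisepCone (vecProj_maxEntVec_add_one_mem_sepCone (ι := ι × ι)))
  · exact (bisepCone _ _ _).smul_mem hμ
      (add_mem (starTensor_vecProj_mem_bisepCone _ hPone) (starTensor_mem_bisepCone_vecProj hPone _))
  · exact (bisepCone _ _ _).smul_mem (by linarith)
      (add_mem (starTensor_vecProj_mem_bisepCone _ hone) (starTensor_mem_bisepCone_vecProj hone _))
  · exact (bisepCone _ _ _).smul_mem hrest (sepCone_le_bisepCone one_mem_sepCone)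

lemma iso_eq (d : ℕ) (p : ℝ) :
    iso d p = (p / d) • vecProj (maxEntVec (Fin d)) + ((1 - p) / d ^ 2) • 1 := by
  ext x y
  by_cases hx : x.1 = x.2 <;>
    simp [iso, phiPlus, vecProj, maxEntVec, Matrix.one_apply, hx, div_eq_mul_inv]

lemma trace_iso {d : ℕ} (hd : d ≠ 0) (p : ℝ) : (iso d p).trace = 1 := by
  rw [iso_eq, Matrix.trace_add, Matrix.trace_smul, Matrix.trace_smul, trace_vecProj,
    sum_normSq_maxEntVec, Matrix.trace_one]
  have hd' : (d : ℂ) ≠ 0 := by exact_mod_cast hd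
  simp only [Fintype.card_fin, Fintype.card_prod, Nat.cast_mul, Complex.real_smul,
    Complex.ofReal_natCast, Complex.ofReal_div, Complex.ofReal_sub, Complex.ofReal_one,
    Complex.ofReal_pow]
  field_simp
  ring

lemma mul_le_one_add_sqrt_two_mul_of_le {d p : ℝ} (hd : 1 ≤ d)
    (hp : p ≤ ((1 + Real.sqrt 2) * d - 1) / (d ^ 2 + 2 * d - 1)) :
    d * p ≤ (1 + Real.sqrt 2) * (1 - p) := by
  have h2 : Real.sqrt 2 ^ 2 = 2 := Real.sq_sqrt (by norm_num)
  have hD : 0 < d ^ 2 + 2 * d - 1 := by nlinarith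
  refine le_of_mul_le_mul_right ?_ hD
  nlinarith [mul_le_mul_of_nonneg_right ((le_div_iff₀ hD).mp hp)
    (by positivity : 0 ≤ d + 1 + Real.sqrt 2)]

/-- For `d ≥ 2`, if `p ≤ ((1+√2)d − 1)/(d² + 2d − 1)`, then the `d`-dimensional star PEN
state `σ_star(p)` is biseparable with respect to the tripartition `A|B|C`. -/
theorem sigmaStar_biseparable (d : ℕ) (hd : 2 ≤ d) (p : ℝ) (hp0 : 0 ≤ p)
    (hp : p ≤ ((1 + Real.sqrt 2) * d - 1) / ((d : ℝ) ^ 2 + 2 * d - 1)) :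
    Bisep3 (sigmaStar d p) := by
  have hd0 : (0 : ℝ) < d := by exact_mod_cast zero_lt_two.trans_le hd
  have hlin := mul_le_one_add_sqrt_two_mul_of_le (by exact_mod_cast one_le_two.trans hd) hp
  have hq : 0 ≤ 1 - p := by nlinarith [Real.sqrt_nonneg 2]
  have hab : p / d ≤ (1 + Real.sqrt 2) * ((1 - p) / d ^ 2) := by
    rw [div_le_iff₀ hd0, mul_div_assoc', div_mul_eq_mul_div, le_div_iff₀ (by positivity)]
    nlinarith
  have hσ : sigmaStar d p = starTensor (iso d p) (iso d p) := rfl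
  refine bisep3_of_mem_bisepCone ?_ ?_
  · rw [hσ, iso_eq]
    exact starTensor_isotropic_mem_bisepCone (by positivity) (div_nonneg hq (by positivity)) hab
  · rw [hσ, trace_starTensor, trace_iso (by omega), mul_one]
end
end

section
/- Fix n ≥ 3 and finite local dimensions for n parties. For each pair 1 ≤ i < j ≤ n, let Λ_{ij} be a linear map sending n-partite density matrices to two-qubit density matrices (interpreted as shared by parties i and j) such that, whenever the input state is separable across a bipartition M|M̄ of the n parties with i ∈ M and j ∈ M̄, the output Λ_{ij}(·) is a separable two-qubit state. (Every LOCC protocol mapping the n parties to a bipartite state of i and j has these properties.) Then for every n-partite biseparable density matrix χ: (2/(n(n−1))) · ∑_{i<j} tr(Λ_{ij}(χ) · φ⁺₂) ≤ 1 − 1/n, where φ⁺₂ is the projector onto the two-qubit maximally entangled state (|00⟩+|11⟩)/√2. -/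
/-!
A pure biseparable state factors across some cut `M | Mᶜ`. For a pair `i < j` crossing the
cut, `Λ i j` produces a separable two-qubit state, and product vectors have fidelity at most
`1/2` with `φ⁺₂` by Cauchy–Schwarz; every other pair has fidelity at most `1`. A cut of `n`
parties is crossed by at least `#M · #Mᶜ ≥ n - 1` of the `n(n-1)/2` pairs, which gives the
bound for pure biseparable states, and the averaged fidelity is linear in the state.
-/

open scoped BigOperators ComplexOrder

noncomputable section

/-- A multipartite pure-state vector (parties indexed by `ι`, party `i` holding the
finite-dimensional space with basis `H i`) factors as a tensor product across the
bipartition `M | Mᶜ`: `ψ = f ⊗ g` where `f` depends only on the coordinates of the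
parties in `M` and `g` only on those of the parties outside `M`. -/
def FactorsAcross {ι : Type} {H : ι → Type} (M : Finset ι)
    (ψ : ((i : ι) → H i) → ℂ) : Prop :=
  ∃ f g : ((i : ι) → H i) → ℂ,
    (∀ x, ψ x = f x * g x) ∧
    (∀ x y, (∀ i ∈ M, x i = y i) → f x = f y) ∧
    (∀ x y, (∀ i, i ∉ M → x i = y i) → g x = g y)

/-- A multipartite pure-state vector is biseparable: it factors across some nonempty
proper bipartition of the parties. -/
def PureBiseparable {ι : Type} [Fintype ι] {H : ι → Type}
    (ψ : ((i : ι) → H i) → ℂ) : Prop :=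
  ∃ M : Finset ι, M.Nonempty ∧ M ≠ Finset.univ ∧ FactorsAcross M ψ

/-- A multipartite density matrix is biseparable if it is a finite convex combination
of projectors onto normalized biseparable pure states.  A state which is not
biseparable is genuinely multipartite entangled (GME). -/
def Biseparable {ι : Type} [Fintype ι] [DecidableEq ι] {H : ι → Type}
    [∀ i, Fintype (H i)]
    (ρ : Matrix ((i : ι) → H i) ((i : ι) → H i) ℂ) : Prop :=
  ∃ (k : ℕ) (w : Fin k → ℝ) (ψ : Fin k → ((i : ι) → H i) → ℂ),
    (∀ t, 0 ≤ w t) ∧ (∑ t, w t = 1) ∧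
    (∀ t, PureBiseparable (ψ t)) ∧
    (∀ t, ∑ x, Complex.normSq (ψ t x) = 1) ∧
    ρ = ∑ t, (w t : ℂ) • vecProj (ψ t)

/-- A density matrix: positive semidefinite with unit trace. -/
def IsState {ι : Type} [Fintype ι] (ρ : Matrix ι ι ℂ) : Prop :=
  ρ.PosSemidef ∧ ρ.trace = 1

/-- An `n`-partite density matrix is separable across the bipartition `M | Mᶜ` if it is
a finite convex combination of projectors onto normalized pure product vectors across
that bipartition. -/
def SeparableAcross {ι : Type} [Fintype ι] [DecidableEq ι] {H : ι → Type}
    [∀ i, Fintype (H i)] (M : Finset ι)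
    (ρ : Matrix ((i : ι) → H i) ((i : ι) → H i) ℂ) : Prop :=
  ∃ (k : ℕ) (w : Fin k → ℝ) (ψ : Fin k → ((i : ι) → H i) → ℂ),
    (∀ t, 0 ≤ w t) ∧ (∑ t, w t = 1) ∧
    (∀ t, FactorsAcross M (ψ t)) ∧
    (∀ t, ∑ x, Complex.normSq (ψ t x) = 1) ∧
    ρ = ∑ t, (w t : ℂ) • vecProj (ψ t)

/-- A separable two-qubit density matrix: a finite convex combination of projectors
onto normalized product vectors. -/
def Sep2 (ρ : Matrix (Fin 2 × Fin 2) (Fin 2 × Fin 2) ℂ) : Prop :=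
  ∃ (k : ℕ) (w : Fin k → ℝ) (f g : Fin k → Fin 2 → ℂ),
    (∀ t, 0 ≤ w t) ∧ (∑ t, w t = 1) ∧
    (∀ t, ∑ a, Complex.normSq (f t a) = 1) ∧
    (∀ t, ∑ a, Complex.normSq (g t a) = 1) ∧
    ρ = ∑ t, (w t : ℂ) • vecProj (fun x => f t x.1 * g t x.2)

open Finset Matrix

lemma vecProj_eq_vecMulVec {ι : Type} (ψ : ι → ℂ) : vecProj ψ = vecMulVec ψ (star ψ) := rfl

lemma isState_vecProj {ι : Type} [Fintype ι] {ψ : ι → ℂ}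
    (hψ : ∑ x, Complex.normSq (ψ x) = 1) : IsState (vecProj ψ) := by
  refine ⟨vecProj_eq_vecMulVec ψ ▸ posSemidef_vecMulVec_self_star ψ, ?_⟩
  simp [vecProj_eq_vecMulVec, dotProduct, Complex.mul_conj, ← Complex.ofReal_sum, hψ]

lemma re_map_sum_smul_le {V : Type*} [AddCommMonoid V] [Module ℂ V] (f : V →ₗ[ℂ] ℂ)
    {k : ℕ} {w : Fin k → ℝ} (hw0 : ∀ t, 0 ≤ w t) (hw1 : ∑ t, w t = 1) {v : Fin k → V} {c : ℝ}
    (hv : ∀ t, (f (v t)).re ≤ c) : (f (∑ t, (w t : ℂ) • v t)).re ≤ c := by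
  calc (f (∑ t, (w t : ℂ) • v t)).re = ∑ t, w t * (f (v t)).re := by
        simp [map_sum, Complex.re_sum]
    _ ≤ ∑ t, w t * c := by gcongr with t; exacts [hw0 t, hv t]
    _ = c := by rw [← Finset.sum_mul, hw1, one_mul]

lemma Matrix.PosSemidef.re_sum_le_card_mul_re_trace {𝕜 ι : Type*} [RCLike 𝕜] [Fintype ι]
    [DecidableEq ι] {A : Matrix ι ι 𝕜} (hA : A.PosSemidef) :
    RCLike.re (∑ i, ∑ j, A i j) ≤ Fintype.card ι * RCLike.re A.trace := by
  have hpair : ∀ i j, 0 ≤ RCLike.re (A i i + A j j - A i j - A j i) := fun i j => by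
    have := (RCLike.nonneg_iff.mp (hA.dotProduct_mulVec_nonneg (Pi.single i 1 - Pi.single j 1))).1
    simp only [dotProduct, Pi.star_apply, Pi.sub_apply, Pi.single_apply, star_sub,
      RCLike.star_def, MonoidWithZeroHom.map_ite_one_zero, mulVec, mul_sub, mul_ite, mul_one,
      mul_zero, sum_sub_distrib, sum_ite_eq', mem_univ, ↓reduceIte, sub_mul, ite_mul, one_mul,
      zero_mul, map_sub, sub_nonneg, tsub_le_iff_right] at this
    simp only [map_sub, map_add]
    linarith
  -- Summed over all `i, j`, these pair terms add up to `2 (card ι · tr A - ∑ i j, A i j)`.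
  have hsum := sum_nonneg fun i (_ : i ∈ univ) => sum_nonneg fun j (_ : j ∈ univ) => hpair i j
  simp only [map_sub, map_add, sum_sub_distrib, sum_add_distrib, sum_const, card_univ,
    nsmul_eq_mul, ← mul_sum] at hsum
  rw [sum_comm (f := fun i j => RCLike.re (A j i))] at hsum
  simp only [trace, Matrix.diag, map_sum]
  linarith

lemma trace_mul_phiPlus {d : ℕ} (ρ : Matrix (Fin d × Fin d) (Fin d × Fin d) ℂ) :
    trace (ρ * phiPlus d) = (1 / d : ℂ) * ∑ i, ∑ j, ρ (i, i) (j, j) := by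
  simp [trace, mul_apply, phiPlus, Fintype.sum_prod_type, Finset.mul_sum, ite_and, mul_comm]

lemma IsState.re_trace_mul_phiPlus_le_one {d : ℕ} {ρ : Matrix (Fin d × Fin d) (Fin d × Fin d) ℂ}
    (hρ : IsState ρ) : (trace (ρ * phiPlus d)).re ≤ 1 := by
  -- the overlap only sees the principal submatrix of `ρ` on the basis vectors `|i i⟩`
  have hdiag := (hρ.1.submatrix (fun i : Fin d => (i, i))).re_sum_le_card_mul_re_trace
  have htrace : (ρ.submatrix (fun i : Fin d => (i, i)) (fun i => (i, i))).trace.re ≤ 1 := by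
    rw [← Complex.one_re, ← hρ.2]
    simp only [trace, Matrix.diag, submatrix_apply, Complex.re_sum, Fintype.sum_prod_type]
    exact Finset.sum_le_sum fun i _ => Finset.single_le_sum (f := fun j => (ρ (i, j) (i, j)).re)
      (fun j _ => (Complex.nonneg_iff.mp hρ.1.diag_nonneg).1) (mem_univ i)
  simp only [Fintype.card_fin, RCLike.re_to_complex, submatrix_apply] at hdiag
  rw [trace_mul_phiPlus, ← Complex.ofReal_natCast, ← Complex.ofReal_one, ← Complex.ofReal_div,
    Complex.re_ofReal_mul]
  calc 1 / (d : ℝ) * (∑ i, ∑ j, ρ (i, i) (j, j)).re ≤ 1 / d * (d * 1) := by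
        gcongr
        exact hdiag.trans (by gcongr)
    _ ≤ 1 := by rw [mul_one, one_div_mul_eq_div]; exact div_self_le_one _

lemma trace_vecProj_mul_phiPlus {d : ℕ} (ψ : Fin d × Fin d → ℂ) :
    trace (vecProj ψ * phiPlus d) = ((Complex.normSq (∑ i, ψ (i, i)) / d : ℝ) : ℂ) := by
  rw [trace_mul_phiPlus, Complex.ofReal_div, Complex.normSq_eq_conj_mul_self, map_sum]
  simp only [vecProj, ← Finset.sum_mul_sum]
  push_cast
  ring

lemma Complex.normSq_sum_mul_le {ι : Type*} (s : Finset ι) (f g : ι → ℂ) :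
    Complex.normSq (∑ i ∈ s, f i * g i) ≤
      (∑ i ∈ s, Complex.normSq (f i)) * ∑ i ∈ s, Complex.normSq (g i) := by
  simp only [Complex.normSq_eq_norm_sq]
  calc ‖∑ i ∈ s, f i * g i‖ ^ 2 ≤ (∑ i ∈ s, ‖f i‖ * ‖g i‖) ^ 2 := by
        gcongr; exact (norm_sum_le _ _).trans_eq (by simp only [norm_mul])
    _ ≤ _ := Finset.sum_mul_sq_le_sq_mul_sq _ _ _

lemma re_trace_vecProj_prod_mul_phiPlus_le {d : ℕ} {f g : Fin d → ℂ}
    (hf : ∑ a, Complex.normSq (f a) = 1) (hg : ∑ a, Complex.normSq (g a) = 1) :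
    (trace (vecProj (fun x : Fin d × Fin d => f x.1 * g x.2) * phiPlus d)).re ≤ 1 / d := by
  rw [trace_vecProj_mul_phiPlus, Complex.ofReal_re]
  gcongr
  simpa [hf, hg] using Complex.normSq_sum_mul_le univ f g

lemma Sep2.re_trace_mul_phiPlus_le_half {ρ : Matrix (Fin 2 × Fin 2) (Fin 2 × Fin 2) ℂ}
    (hρ : Sep2 ρ) : (trace (ρ * phiPlus 2)).re ≤ 1 / 2 := by
  obtain ⟨k, w, f, g, hw0, hw1, hf, hg, rfl⟩ := hρ
  exact re_map_sum_smul_le (traceLinearMap _ ℂ ℂ ∘ₗ LinearMap.mulRight ℂ (phiPlus 2)) hw0 hw1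
    fun t => by simpa using re_trace_vecProj_prod_mul_phiPlus_le (hf t) (hg t)

lemma FactorsAcross.compl {ι : Type} [Fintype ι] [DecidableEq ι] {H : ι → Type} {M : Finset ι}
    {ψ : ((i : ι) → H i) → ℂ} (h : FactorsAcross M ψ) : FactorsAcross Mᶜ ψ := by
  obtain ⟨f, g, hfg, hf, hg⟩ := h
  exact ⟨g, f, fun x => by rw [hfg, mul_comm],
    fun x y hxy => hg x y fun i hi => hxy i (mem_compl.2 hi),
    fun x y hxy => hf x y fun i hi => hxy i fun h => mem_compl.1 h hi⟩

lemma separableAcross_vecProj {ι : Type} [Fintype ι] [DecidableEq ι] {H : ι → Type}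
    [∀ i, Fintype (H i)] {M : Finset ι} {ψ : ((i : ι) → H i) → ℂ} (hψ : FactorsAcross M ψ)
    (hnorm : ∑ x, Complex.normSq (ψ x) = 1) : SeparableAcross M (vecProj ψ) :=
  ⟨1, fun _ => 1, fun _ => ψ, fun _ => zero_le_one, by simp, fun _ => hψ, fun _ => hnorm, by simp⟩

section Crossing

variable {ι : Type*} [Fintype ι] [LinearOrder ι] (M : Finset ι)

lemma card_sub_one_le_card_crossing (hM : M.Nonempty) (hMc : M ≠ univ) :
    Fintype.card ι - 1 ≤ #{e : ι × ι | e.1 < e.2 ∧ Xor (e.1 ∈ M) (e.2 ∈ M)} := by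
  have hMlt : #M < Fintype.card ι := card_lt_card (ssubset_univ_iff.mpr hMc)
  have hcard : #M + #Mᶜ = Fintype.card ι := card_add_card_compl M
  calc Fintype.card ι - 1 ≤ #M * #Mᶜ := by
        obtain ⟨a, ha⟩ : ∃ a, #M = a + 1 := ⟨#M - 1, by have := hM.card_pos; omega⟩
        obtain ⟨b, hb⟩ : ∃ b, #Mᶜ = b + 1 := ⟨#Mᶜ - 1, by omega⟩
        rw [← hcard, ha, hb, add_mul, mul_add]
        omega
    _ = #(M ×ˢ Mᶜ) := (card_product _ _).symm
    _ ≤ _ := by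
        -- sorting is injective on `M ×ˢ Mᶜ`: membership in `M` tells which end came first
        refine card_le_card_of_injOn (fun p => (min p.1 p.2, max p.1 p.2)) ?_ ?_
        · rintro ⟨a, b⟩ hab
          simp only [coe_product, Set.mem_prod, mem_coe, mem_compl] at hab
          simp only [coe_filter, mem_univ, true_and, Set.mem_ofPred_eq]
          grind
        · rintro ⟨a, b⟩ hab ⟨a', b'⟩ hab' heq
          simp only [coe_product, Set.mem_prod, mem_coe, mem_compl] at hab hab'
          simp only [Prod.mk.injEq] at heq ⊢
          grind

lemma sum_le_choose_two_sub_of_crossing_le_half (hM : M.Nonempty) (hMc : M ≠ univ)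
    (F : ι → ι → ℝ) (hF : ∀ i j, i < j → F i j ≤ 1)
    (hFcross : ∀ i j, i < j → Xor (i ∈ M) (j ∈ M) → F i j ≤ 1 / 2) :
    ∑ e ∈ {e : ι × ι | e.1 < e.2}, F e.1 e.2 ≤
      (Fintype.card ι).choose 2 - ((Fintype.card ι : ℝ) - 1) / 2 := by
  set E : Finset (ι × ι) := {e : ι × ι | e.1 < e.2}
  set X := E.filter fun e => Xor (e.1 ∈ M) (e.2 ∈ M)
  have hX : (Fintype.card ι : ℝ) ≤ #X + 1 := by
    have := card_sub_one_le_card_crossing M hM hMc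
    rw [← filter_filter] at this
    exact_mod_cast Nat.sub_le_iff_le_add.mp this
  have hE : (#E : ℝ) = #X + #(E.filter fun e => ¬Xor (e.1 ∈ M) (e.2 ∈ M)) := by
    exact_mod_cast (card_filter_add_card_filter_not _).symm
  calc ∑ e ∈ E, F e.1 e.2 ≤ ∑ e ∈ E, if Xor (e.1 ∈ M) (e.2 ∈ M) then (1 / 2 : ℝ) else 1 := by
        refine sum_le_sum fun e he => ?_
        have hlt : e.1 < e.2 := (mem_filter.mp he).2
        split_ifs with hcross
        exacts [hFcross _ _ hlt hcross, hF _ _ hlt]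
    _ = #E - #X / 2 := by
        rw [sum_ite, sum_const, sum_const, hE]
        simp only [nsmul_eq_mul]
        ring
    _ ≤ _ := by
        rw [Fintype.card_product_filter_lt]
        linarith

end Crossing

lemma two_div_mul_le_one_sub_inv_of_le (n : ℕ) {S : ℝ}
    (hS : S ≤ n.choose 2 - ((n : ℝ) - 1) / 2) :
    2 / ((n : ℝ) * ((n : ℝ) - 1)) * S ≤ 1 - 1 / (n : ℝ) := by
  rcases Nat.lt_or_ge n 2 with hn | hn
  -- for `n ≤ 1` the left side is `0`, as `2 / 0 = 0`
  · interval_cases n <;> norm_num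
  have hn' : (2 : ℝ) ≤ n := by exact_mod_cast hn
  calc 2 / ((n : ℝ) * ((n : ℝ) - 1)) * S
      ≤ 2 / ((n : ℝ) * ((n : ℝ) - 1)) * (n.choose 2 - ((n : ℝ) - 1) / 2) := by
        gcongr
        exact div_nonneg zero_le_two (mul_nonneg (by linarith) (by linarith))
    _ = 1 - 1 / (n : ℝ) := by
        rw [Nat.cast_choose_two]
        field_simp

lemma sum_re_trace_mul_phiPlus_le_of_pureBiseparable {ι : Type} [Fintype ι] [LinearOrder ι]
    {H : ι → Type} [∀ i, Fintype (H i)]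
    (Λ : ι → ι → (Matrix ((i : ι) → H i) ((i : ι) → H i) ℂ →ₗ[ℂ]
      Matrix (Fin 2 × Fin 2) (Fin 2 × Fin 2) ℂ))
    (hΛstate : ∀ i j, i < j → ∀ ρ, IsState ρ → IsState (Λ i j ρ))
    (hΛsep : ∀ i j, i < j → ∀ M : Finset ι, i ∈ M → j ∉ M →
      ∀ ρ, IsState ρ → SeparableAcross M ρ → Sep2 (Λ i j ρ))
    {ψ : ((i : ι) → H i) → ℂ} (hψ : PureBiseparable ψ) (hnorm : ∑ x, Complex.normSq (ψ x) = 1) :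
    ∑ e ∈ {e : ι × ι | e.1 < e.2}, (trace (Λ e.1 e.2 (vecProj ψ) * phiPlus 2)).re ≤
      (Fintype.card ι).choose 2 - ((Fintype.card ι : ℝ) - 1) / 2 := by
  obtain ⟨M, hM, hMc, hfac⟩ := hψ
  have hstate := isState_vecProj hnorm
  refine sum_le_choose_two_sub_of_crossing_le_half M hM hMc _
    (fun i j hij => (hΛstate i j hij _ hstate).re_trace_mul_phiPlus_le_one) ?_
  rintro i j hij (⟨hi, hj⟩ | ⟨hj, hi⟩)
  · exact (hΛsep i j hij M hi hj _ hstate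
      (separableAcross_vecProj hfac hnorm)).re_trace_mul_phiPlus_le_half
  · exact (hΛsep i j hij Mᶜ (mem_compl.2 hi) (fun h => mem_compl.1 h hj) _ hstate
      (separableAcross_vecProj hfac.compl hnorm)).re_trace_mul_phiPlus_le_half

theorem biseparable_fidelity_bound_general (n : ℕ) (D : Fin n → ℕ)
    (Λ : Fin n → Fin n →
      (Matrix ((i : Fin n) → Fin (D i)) ((i : Fin n) → Fin (D i)) ℂ →ₗ[ℂ]
        Matrix (Fin 2 × Fin 2) (Fin 2 × Fin 2) ℂ))
    (hΛstate : ∀ i j, i < j → ∀ ρ, IsState ρ → IsState (Λ i j ρ))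
    (hΛsep : ∀ i j, i < j → ∀ M : Finset (Fin n), i ∈ M → j ∉ M →
      ∀ ρ, IsState ρ → SeparableAcross M ρ → Sep2 (Λ i j ρ))
    (χ : Matrix ((i : Fin n) → Fin (D i)) ((i : Fin n) → Fin (D i)) ℂ)
    (hbs : Biseparable χ) :
    (2 / ((n : ℝ) * ((n : ℝ) - 1))) *
        ∑ e ∈ Finset.univ.filter (fun e : Fin n × Fin n => e.1 < e.2),
          (Matrix.trace (Λ e.1 e.2 χ * phiPlus 2)).re
      ≤ 1 - 1 / (n : ℝ) := by
  obtain ⟨k, w, ψ, hw0, hw1, hψ, hnorm, rfl⟩ := hbs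
  refine two_div_mul_le_one_sub_inv_of_le n ?_
  have h := re_map_sum_smul_le
    (∑ e ∈ {e : Fin n × Fin n | e.1 < e.2},
      traceLinearMap _ ℂ ℂ ∘ₗ LinearMap.mulRight ℂ (phiPlus 2) ∘ₗ Λ e.1 e.2) hw0 hw1
    fun t => by
      simpa using sum_re_trace_mul_phiPlus_le_of_pureBiseparable Λ hΛstate hΛsep (hψ t) (hnorm t)
  simpa only [LinearMap.sum_apply, LinearMap.comp_apply, traceLinearMap_apply,
    LinearMap.mulRight_apply, Complex.re_sum, Fintype.card_fin] using h

/-- **Lemma 5 (fidelity bound for biseparable states).**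
Fix `n ≥ 3` parties with local dimensions `D i`.  For each pair `i < j`, let `Λ i j` be
a linear map taking `n`-partite density matrices to two-qubit density matrices (shared
by `i` and `j`), which moreover sends every state that is separable across a bipartition
`M|M̄` with `i ∈ M`, `j ∉ M` to a separable two-qubit state (every LOCC protocol from
the `n` parties to parties `i, j` has these properties).  Then for every biseparable
density matrix `χ`,
`(2/(n(n-1))) ∑_{i<j} F(Λ_{ij}(χ), φ⁺₂) ≤ 1 − 1/n`. -/
theorem biseparable_fidelity_bound (n : ℕ) (hn : 3 ≤ n) (D : Fin n → ℕ)
    (Λ : Fin n → Fin n →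
      (Matrix ((i : Fin n) → Fin (D i)) ((i : Fin n) → Fin (D i)) ℂ →ₗ[ℂ]
        Matrix (Fin 2 × Fin 2) (Fin 2 × Fin 2) ℂ))
    (hΛstate : ∀ i j, i < j → ∀ ρ, IsState ρ → IsState (Λ i j ρ))
    (hΛsep : ∀ i j, i < j → ∀ M : Finset (Fin n), i ∈ M → j ∉ M →
      ∀ ρ, IsState ρ → SeparableAcross M ρ → Sep2 (Λ i j ρ))
    (χ : Matrix ((i : Fin n) → Fin (D i)) ((i : Fin n) → Fin (D i)) ℂ)
    (hχ : IsState χ) (hbs : Biseparable χ) :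
    (2 / ((n : ℝ) * ((n : ℝ) - 1))) *
        ∑ e ∈ Finset.univ.filter (fun e : Fin n × Fin n => e.1 < e.2),
          (Matrix.trace (Λ e.1 e.2 χ * phiPlus 2)).re
      ≤ 1 - 1 / (n : ℝ) :=
  biseparable_fidelity_bound_general n D Λ hΛstate hΛsep χ hbs
end
end
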